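/- Let (Γ, A) be an E-GCM graph that is unital ON-cyclic (the product of scalars K along every ON-cycle equals 1). Then for every ON-path 𝒫 in (Γ, A) there exists a simple ON-path 𝒬 with the same start and end nodes such that Π_𝒬 = Π_𝒫. -/

import Mathlib

open Real

variable {n : ℕ}

/-- E-generalized Cartan matrix: diagonal entries 2, off-diagonal entries nonpositive,
`a_{ij} = 0 ↔ a_{ji} = 0`, and each off-diagonal product is `≥ 4` or of the form
`4cos²(π/k)` for an integer `k ≥ 2`. -/
def IsEGCM (A : Fin n → Fin n → ℝ) : Prop :=
  (∀ i, A i i = 2) ∧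
  (∀ i j, i ≠ j → A i j ≤ 0) ∧
  (∀ i j, A i j = 0 → A j i = 0) ∧
  (∀ i j, i ≠ j → A i j * A j i ≥ 4 ∨
    ∃ k : ℕ, 2 ≤ k ∧ A i j * A j i = 4 * (Real.cos (Real.pi / k)) ^ 2)

/-- The Coxeter exponent `m_{ij}` (with `0` encoding `∞`). -/
noncomputable def mval (A : Fin n → Fin n → ℝ) (i j : Fin n) : ℕ :=
  open scoped Classical in
  if h : ∃ k : ℕ, 2 ≤ k ∧ A i j * A j i = 4 * (Real.cos (Real.pi / k)) ^ 2
  then h.choose else 0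

/-- The generating "reflection" `S_i(v) = v - 2B(α_i, v)α_i` where `B(α_i, α_j) = a_{ij}/2`
and the simple roots `α_i` are the standard basis vectors of `Fin n → ℝ`. -/
noncomputable def S (A : Fin n → Fin n → ℝ) (i : Fin n) : Function.End (Fin n → ℝ) :=
  fun v => v - (∑ j, A i j * v j) • (Pi.single i (1 : ℝ) : Fin n → ℝ)

/-- The representing group `σ(W)`, as the monoid generated by the reflections `S_i`
(each `S_i` is an involution, so this is a group of transformations). -/
noncomputable def Wgrp (A : Fin n → Fin n → ℝ) : Submonoid (Function.End (Fin n → ℝ)) :=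
  Submonoid.closure (Set.range (S A))

/-- The simple root `α_i`. -/
noncomputable def simple (i : Fin n) : Fin n → ℝ := Pi.single i 1

/-- The root system `Φ = {w.α_i}`. -/
noncomputable def Phi (A : Fin n → Fin n → ℝ) : Set (Fin n → ℝ) :=
  {v | ∃ w ∈ Wgrp A, ∃ i, w (simple i) = v}

/-- Positive roots. -/
noncomputable def PhiPos (A : Fin n → Fin n → ℝ) : Set (Fin n → ℝ) :=
  {v | v ∈ Phi A ∧ ∀ j, 0 ≤ v j}

/-- Negative roots. -/
noncomputable def PhiNeg (A : Fin n → Fin n → ℝ) : Set (Fin n → ℝ) :=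
  {v | v ∈ Phi A ∧ ∀ j, v j ≤ 0}

/-- `𝔖(α)`: the positive roots which are real scalar multiples of `α`. -/
noncomputable def Sfrak (A : Fin n → Fin n → ℝ) (α : Fin n → ℝ) : Set (Fin n → ℝ) :=
  {β | β ∈ PhiPos A ∧ ∃ K : ℝ, β = K • α}

/-- `N(w)`: the positive roots sent to negative roots by `w`. -/
noncomputable def Nset (A : Fin n → Fin n → ℝ) (w : Function.End (Fin n → ℝ)) :
    Set (Fin n → ℝ) :=
  {α | α ∈ PhiPos A ∧ w α ∈ PhiNeg A}

/-- The Coxeter length of `w`: the least length of a word in the generators `S_i`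
representing `w`. -/
noncomputable def len (A : Fin n → Fin n → ℝ) (w : Function.End (Fin n → ℝ)) : ℕ :=
  sInf {p | ∃ l : List (Fin n), l.length = p ∧ (l.map (S A)).prod = w}

/-- `γ_i` and `γ_j` are odd neighbors: `m_{ij}` is odd (in particular finite). -/
def OddNbr (A : Fin n → Fin n → ℝ) (i j : Fin n) : Prop := i ≠ j ∧ Odd (mval A i j)

/-- The scalar `K_{ji} = -a_{ji}/(2cos(π/m_{ij}))`. -/
noncomputable def Kval (A : Fin n → Fin n → ℝ) (j i : Fin n) : ℝ :=
  -(A j i) / (2 * Real.cos (Real.pi / (mval A j i)))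

/-- The scalar `Π_𝒫` attached to an ON-path `𝒫`: the product of the `K`'s along its steps. -/
noncomputable def pathProd (A : Fin n → Fin n → ℝ) : List (Fin n) → ℝ
  | [] => 1
  | [_] => 1
  | i :: j :: t => Kval A j i * pathProd A (j :: t)

/-- An ON-path: consecutive nodes are odd neighbors. -/
def IsONPath (A : Fin n → Fin n → ℝ) (l : List (Fin n)) : Prop := l.Chain' (OddNbr A)

/-- An ON-cycle: an ON-path of nonzero length whose start and end nodes coincide. -/
def IsONCycle (A : Fin n → Fin n → ℝ) (l : List (Fin n)) : Prop :=
  IsONPath A l ∧ 2 ≤ l.length ∧ l.head? = l.getLast?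

/-- `(Γ, A)` is unital ON-cyclic: `Π_𝒞 = 1` for every ON-cycle `𝒞`. -/
def UnitalONCyclic (A : Fin n → Fin n → ℝ) : Prop :=
  ∀ l : List (Fin n), IsONCycle A l → pathProd A l = 1

/-!
Whenever a node repeats, an ON-path `X ++ v :: Y ++ v :: Z` splits at the two copies of `v` into
`X ++ v :: Z` and the ON-cycle `v :: Y ++ [v]`. The scalar `Π` is multiplicative under such splittings,
so unitality of the cycle lets us cut it out without changing `Π`, the ends or the ON-property.
Repeating this on a strictly shorter path terminates in a path without repeated nodes.
-/

namespace List

theorem exists_eq_append_cons_append_cons_of_not_nodup {α : Type*} {l : List α} (h : ¬ l.Nodup) :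
    ∃ X v Y Z, l = X ++ v :: (Y ++ v :: Z) := by
  obtain ⟨v, hv⟩ : ∃ v, [v, v] <+ l := by simpa [nodup_iff_sublist] using h
  obtain ⟨r₁, r₂, rfl, hv₁, hv₂⟩ := cons_sublist_iff.1 hv
  obtain ⟨X, Y₁, rfl⟩ := append_of_mem hv₁
  obtain ⟨Y₂, Z, rfl⟩ := append_of_mem (singleton_sublist.1 hv₂)
  exact ⟨X, v, Y₁ ++ Y₂, Z, by simp⟩

theorem isChain_append_cons_append_cons_iff {α : Type*} {R : α → α → Prop} {X Y Z : List α}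
    {v : α} :
    IsChain R (X ++ v :: (Y ++ v :: Z)) ↔
      IsChain R (X ++ [v]) ∧ IsChain R (v :: (Y ++ [v])) ∧ IsChain R (v :: Z) := by
  rw [isChain_split, ← cons_append, isChain_split (l₁ := v :: Y), cons_append]

theorem IsChain.erase_loop {α : Type*} {R : α → α → Prop} {X Y Z : List α} {v : α}
    (h : IsChain R (X ++ v :: (Y ++ v :: Z))) : IsChain R (X ++ v :: Z) := by
  rw [isChain_append_cons_append_cons_iff] at h
  exact isChain_split.2 ⟨h.1, h.2.2⟩

end List

section ONPaths

variable {A : Fin n → Fin n → ℝ}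

theorem pathProd_append_cons :
    ∀ (l₁ : List (Fin n)) (v : Fin n) (l₂ : List (Fin n)),
      pathProd A (l₁ ++ v :: l₂) = pathProd A (l₁ ++ [v]) * pathProd A (v :: l₂)
  | [], v, l₂ => by cases l₂ <;> simp [pathProd]
  | [a], v, l₂ => by cases l₂ <;> simp [pathProd]
  | a :: b :: t, v, l₂ => by
      simp only [List.cons_append, pathProd]
      rw [← List.cons_append, pathProd_append_cons (b :: t) v l₂, List.cons_append]
      ring

theorem UnitalONCyclic.pathProd_erase_loop (hu : UnitalONCyclic A) {X Y Z : List (Fin n)}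
    {v : Fin n} (hP : IsONPath A (X ++ v :: (Y ++ v :: Z))) :
    pathProd A (X ++ v :: (Y ++ v :: Z)) = pathProd A (X ++ v :: Z) := by
  have hcycle : IsONCycle A (v :: (Y ++ [v])) :=
    ⟨(List.isChain_append_cons_append_cons_iff.1 hP).2.1, by simp,
      by rw [← List.cons_append, List.getLast?_append_cons]; rfl⟩
  rw [pathProd_append_cons X v, pathProd_append_cons X v Z, ← List.cons_append,
    pathProd_append_cons (v :: Y), List.cons_append, hu _ hcycle, one_mul]

theorem UnitalONCyclic.exists_nodup_isONPath (hu : UnitalONCyclic A) (P : List (Fin n))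
    (hP : IsONPath A P) :
    ∃ Q : List (Fin n), IsONPath A Q ∧ Q.Nodup ∧ Q.head? = P.head? ∧
      Q.getLast? = P.getLast? ∧ pathProd A Q = pathProd A P := by
  by_cases hnd : P.Nodup
  · exact ⟨P, hP, hnd, rfl, rfl, rfl⟩
  obtain ⟨X, v, Y, Z, rfl⟩ := List.exists_eq_append_cons_append_cons_of_not_nodup hnd
  obtain ⟨Q, hQ, hQnd, hhead, hlast, hprod⟩ :=
    hu.exists_nodup_isONPath (X ++ v :: Z) (List.IsChain.erase_loop hP)
  refine ⟨Q, hQ, hQnd, ?_, ?_, ?_⟩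
  · rw [hhead]
    cases X <;> rfl
  · rw [hlast, List.getLast?_append_cons, List.getLast?_append_cons, ← List.cons_append,
      List.getLast?_append_cons]
  · rw [hprod, hu.pathProd_erase_loop hP]
termination_by P.length
decreasing_by subst_vars; simp

end ONPaths

theorem stmt12_general (A : Fin n → Fin n → ℝ) (hu : UnitalONCyclic A)
    (P : List (Fin n)) (hP : IsONPath A P) :
    ∃ Q : List (Fin n), IsONPath A Q ∧ Q.dropLast.Nodup ∧ Q.tail.Nodup ∧
      Q.head? = P.head? ∧ Q.getLast? = P.getLast? ∧ pathProd A Q = pathProd A P := by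
  obtain ⟨Q, hQ, hQnd, hhead, hlast, hprod⟩ := hu.exists_nodup_isONPath P hP
  exact ⟨Q, hQ, hQnd.sublist Q.dropLast_sublist, hQnd.sublist Q.tail_sublist, hhead, hlast, hprod⟩

/-- if `(Γ, A)` is unital ON-cyclic, then every ON-path `𝒫` is
`Π`-equivalent to a simple ON-path `𝒬` (same start and end nodes, `Π_𝒬 = Π_𝒫`). -/
theorem stmt12 (A : Fin n → Fin n → ℝ) (hA : IsEGCM A) (hu : UnitalONCyclic A)
    (P : List (Fin n)) (hP : IsONPath A P) :
    ∃ Q : List (Fin n), IsONPath A Q ∧ Q.dropLast.Nodup ∧ Q.tail.Nodup ∧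
      Q.head? = P.head? ∧ Q.getLast? = P.getLast? ∧ pathProd A Q = pathProd A P :=
  stmt12_general A hu P hP
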